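/- arXiv:2107.02509 — 3 statements merged into one kernel-verified Lean document; each statement's English description precedes it below -/
import Mathlib

section
/- Let m ≥ 1 and let a, b be natural numbers with a < 2^m and b < 2^m. Then b = (a + 1) mod 2^m if and only if for every i < m the following holds: bit i of a equals bit i of b exactly when there exists j < i such that bit j of a is 0 (bits are indexed starting from the least significant bit, e.g. via Nat.testBit). -/
/-!
Adding one to `n` flips exactly the trailing run of ones together with the first zero above it,
so bit `i` of `n + 1` agrees with bit `i` of `n` iff a zero occurs among the bits below `i`.
Since numbers below `2 ^ m` are determined by their lowest `m` bits, the theorem follows by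
comparing `b` with `(a + 1) % 2 ^ m` bit by bit.
-/

theorem Nat.testBit_add_one_eq_testBit_iff (n i : ℕ) :
    (n + 1).testBit i = n.testBit i ↔ ∃ j < i, n.testBit j = false := by
  induction i generalizing n with
  | zero =>
    simp only [testBit_zero, decide_eq_decide, not_lt_zero, false_and, exists_false, iff_false]
    omega
  | succ i ih =>
    simp only [testBit_add_one, exists_lt_succ_left, testBit_zero, decide_eq_false_iff_not]
    rcases mod_two_eq_zero_or_one n with hn | hn
    · have hdiv : (n + 1) / 2 = n / 2 := by omega
      simp [hdiv, hn]
    · have hdiv : (n + 1) / 2 = n / 2 + 1 := by omega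
      simp [hdiv, hn, ih]

theorem Nat.eq_iff_testBit_eq_of_lt_two_pow {m x y : ℕ} (hx : x < 2 ^ m) (hy : y < 2 ^ m) :
    x = y ↔ ∀ i < m, x.testBit i = y.testBit i := by
  refine ⟨fun h _ _ => h ▸ rfl, fun h => ?_⟩
  rw [← mod_eq_of_lt hx, ← mod_eq_of_lt hy, eq_iff_testBit_eq]
  intro i
  by_cases hi : i < m <;> simp [hi, h]

theorem succ_mod_pow_iff_bits_general (m a b : ℕ)
    (hb : b < 2 ^ m) :
    b = (a + 1) % 2 ^ m ↔
      ∀ i < m, (a.testBit i = b.testBit i ↔ ∃ j < i, a.testBit j = false) := by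
  rw [Nat.eq_iff_testBit_eq_of_lt_two_pow hb (Nat.mod_lt _ (Nat.two_pow_pos m))]
  refine forall₂_congr fun i hi => ?_
  rw [Nat.testBit_mod_two_pow, decide_eq_true hi, Bool.true_and,
    ← Nat.testBit_add_one_eq_testBit_iff]
  cases a.testBit i <;> cases b.testBit i <;> cases (a + 1).testBit i <;> decide

/-- The fact (count) used in the lower-bound construction: for `m ≥ 1` and
`m`-bit counter values `a, b < 2^m`, `b` is the successor of `a` modulo `2^m`
iff for every bit position `i < m`, bit `i` of `a` equals bit `i` of `b`
exactly when some strictly less significant bit of `a` is `0`. -/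
theorem succ_mod_pow_iff_bits (m a b : ℕ) (hm : 1 ≤ m)
    (ha : a < 2 ^ m) (hb : b < 2 ^ m) :
    b = (a + 1) % 2 ^ m ↔
      ∀ i < m, (a.testBit i = b.testBit i ↔ ∃ j < i, a.testBit j = false) :=
  succ_mod_pow_iff_bits_general m a b hb
end

section
/- Let G be an input-total concurrent game structure. Suppose there do not exist a play t1 of G and a strategy f for the agent ξ_H such that every t2 ∈ out(G, s0, {f}) satisfies: if L(t2(i)) ∩ I = L(t1(i)) ∩ I for all i ∈ ℕ, then L(t2(j)) ∩ O ≠ L(t1(j)) ∩ O for some j ∈ ℕ (i.e., G satisfies non-deducibility of strategies, NDS: ¬(∃π1. ⟨⟨ξ_H⟩⟩π2. G(∧_{a∈I} a_{π1} ↔ a_{π2}) → F(∨_{a∈O} a_{π1} ↮ a_{π2}))). Then G satisfies generalized non-interference (GNI). -/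
/-- A concurrent game structure `G = (S, s0, Ξ, M, δ, AP, L)` (the state space,
agent set, move set and proposition set are the type parameters). -/
structure CGS (S Agent Move AP : Type) where
  s0 : S
  trans : S → (Agent → Move) → S
  label : S → Set AP

namespace CGS

variable {S Agent Move AP : Type}

/-- The finite prefix `u(0) ⋯ u(i)` of an infinite sequence of states. -/
def prefixUpTo (u : ℕ → S) (i : ℕ) : List S :=
  List.ofFn fun j : Fin (i + 1) => u j

/-- A play of `G`: an infinite state sequence starting in `s0` in which every
step is obtained via some move vector. -/
def IsPlay (G : CGS S Agent Move AP) (u : ℕ → S) : Prop :=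
  u 0 = G.s0 ∧ ∀ i, ∃ σ : Agent → Move, G.trans (u i) σ = u (i + 1)

/-- `outSet G s A F`: the outcomes starting in `s` when each agent `ξ ∈ A`
plays according to the strategy `F ξ : S⁺ → M`. -/
def outSet (G : CGS S Agent Move AP) (s : S) (A : Set Agent)
    (F : Agent → List S → Move) : Set (ℕ → S) :=
  { u | u 0 = s ∧ ∀ i, ∃ σ : Agent → Move,
      G.trans (u i) σ = u (i + 1) ∧ ∀ ξ ∈ A, σ ξ = F ξ (prefixUpTo u i) }

/-- `G` is input-total: in every state the high-input agent can enforce any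
valuation of the high-input propositions in the next state, and likewise the
low-input agent for the low-input propositions. -/
def InputTotal (G : CGS S Agent Move AP) (H I : Set AP) (ξH ξL : Agent) : Prop :=
  ∀ s : S,
    (∀ v : Set AP, v ⊆ H → ∃ m : Move, ∀ σ : Agent → Move,
      σ ξH = m → G.label (G.trans s σ) ∩ H = v) ∧
    (∀ w : Set AP, w ⊆ I → ∃ m' : Move, ∀ σ : Agent → Move,
      σ ξL = m' → G.label (G.trans s σ) ∩ I = w)

/-- Generalized non-interference: for all plays `t₁, t₂` there is a play `t₃`
agreeing with `t₁` on the high inputs and with `t₂` on the outputs. -/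
def GNI (G : CGS S Agent Move AP) (H O : Set AP) : Prop :=
  ∀ t₁ t₂ : ℕ → S, IsPlay G t₁ → IsPlay G t₂ →
    ∃ t₃ : ℕ → S, IsPlay G t₃ ∧ ∀ i : ℕ,
      G.label (t₃ i) ∩ H = G.label (t₁ i) ∩ H ∧
      G.label (t₃ i) ∩ O = G.label (t₂ i) ∩ O

end CGS

open CGS

/-!
Assume GNI fails for plays `t₁, t₂`. By input totality the high-input agent has a strategy
whose every outcome copies the high inputs of `t₁`. Each such outcome is a play, so, GNI
failing, it differs from `t₂` on the outputs at some point; hence `t₂` and this strategy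
witness a violation of NDS.
-/

namespace CGS

variable {S Agent Move AP : Type}

@[simp]
theorem length_prefixUpTo (u : ℕ → S) (i : ℕ) : (prefixUpTo u i).length = i + 1 := by
  simp [prefixUpTo]

@[simp]
theorem getLast?_prefixUpTo (u : ℕ → S) (i : ℕ) : (prefixUpTo u i).getLast? = some (u i) := by
  rw [prefixUpTo, List.getLast?_eq_some_getLast (by simp), List.getLast_ofFn_succ]
  simp

theorem isPlay_of_mem_outSet {G : CGS S Agent Move AP} {A : Set Agent}
    {F : Agent → List S → Move} {u : ℕ → S} (hu : u ∈ outSet G G.s0 A F) : IsPlay G u :=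
  ⟨hu.1, fun i => (hu.2 i).imp fun _ hσ => hσ.1⟩

theorem exists_strategy_forcing_label_inter (G : CGS S Agent Move AP) (H : Set AP)
    (ξ : Agent)
    (hξ : ∀ s : S, ∀ v ⊆ H, ∃ m : Move, ∀ σ : Agent → Move,
      σ ξ = m → G.label (G.trans s σ) ∩ H = v)
    (t : ℕ → S) (ht : t 0 = G.s0) :
    ∃ f : List S → Move, ∀ u ∈ outSet G G.s0 {ξ} (fun _ => f),
      ∀ i, G.label (u i) ∩ H = G.label (t i) ∩ H := by
  choose move hmove using hξ
  -- A history of length `i + 1` ends in `u i`; the move enforces the valuation of `t (i + 1)`.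
  refine ⟨fun h => move (h.getLastD G.s0) (G.label (t h.length) ∩ H)
    Set.inter_subset_right, fun u hu i => ?_⟩
  cases i with
  | zero => rw [hu.1, ht]
  | succ i =>
    obtain ⟨σ, hstep, hσ⟩ := hu.2 i
    rw [← hstep]
    exact hmove _ _ _ σ (by simpa using hσ ξ rfl)

end CGS

theorem NDS_implies_GNI_general {S Agent Move AP : Type}
    (G : CGS S Agent Move AP) (H I O : Set AP) (ξH ξL : Agent)
    (hIT : InputTotal G H I ξH ξL)
    (hNDS : ¬ ∃ t₁ : ℕ → S, IsPlay G t₁ ∧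
      ∃ f : List S → Move,
        ∀ t₂ ∈ outSet G G.s0 {ξH} (fun _ => f),
          (∀ i : ℕ, G.label (t₂ i) ∩ I = G.label (t₁ i) ∩ I) →
            ∃ j : ℕ, G.label (t₂ j) ∩ O ≠ G.label (t₁ j) ∩ O) :
    GNI G H O := by
  intro t₁ t₂ hp₁ hp₂
  by_contra hGNI
  push Not at hGNI
  obtain ⟨f, hf⟩ :=
    exists_strategy_forcing_label_inter G H ξH (fun s => (hIT s).1) t₁ hp₁.1
  refine hNDS ⟨t₂, hp₂, f, fun u hu _ => ?_⟩
  obtain ⟨j, hj⟩ := hGNI u (isPlay_of_mem_outSet hu)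
  exact ⟨j, hj (hf u hu j)⟩

/-- Non-deducibility of strategies implies GNI: if there do *not* exist a play
`t₁` of `G` and a strategy `f` for the high-input agent `ξH` such that every
outcome `t₂` of `f` satisfies "if `t₂` agrees with `t₁` on the low inputs,
then it differs from `t₁` on the outputs at some point"
(i.e. `G ⊨ ¬(∃π₁.⟨⟨ξH⟩⟩π₂. G(∧_{a∈I} a_{π₁} ↔ a_{π₂}) → F(∨_{a∈O} a_{π₁} ↮ a_{π₂}))`),
then `G` satisfies GNI. -/
theorem NDS_implies_GNI {S Agent Move AP : Type}
    [Fintype S] [Fintype Agent] [Fintype Move] [Fintype AP]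
    (G : CGS S Agent Move AP) (H I O : Set AP) (ξN ξH ξL : Agent)
    (hHI : Disjoint H I) (hHO : Disjoint H O) (hIO : Disjoint I O)
    (hIT : InputTotal G H I ξH ξL)
    (hNDS : ¬ ∃ t₁ : ℕ → S, IsPlay G t₁ ∧
      ∃ f : List S → Move,
        ∀ t₂ ∈ outSet G G.s0 {ξH} (fun _ => f),
          (∀ i : ℕ, G.label (t₂ i) ∩ I = G.label (t₁ i) ∩ I) →
            ∃ j : ℕ, G.label (t₂ j) ∩ O ≠ G.label (t₁ j) ∩ O) :
    GNI G H O :=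
  NDS_implies_GNI_general G H I O ξH ξL hIT hNDS
end

section
/- Every input-total concurrent game structure that is simulation secure satisfies generalized non-interference (GNI). Moreover the witness path can be chosen to additionally match low inputs: for all plays t1, t2 of an input-total, simulation-secure G there exists a play t3 of G with L(t3(i)) ∩ H = L(t1(i)) ∩ H, L(t3(i)) ∩ I = L(t2(i)) ∩ I, and L(t3(i)) ∩ O = L(t2(i)) ∩ O for all i ∈ ℕ. -/
namespace CGS

variable {S Agent Move AP : Type}

/-- `s ⇒^{iL}_{iH} s'`: there is a move vector taking `s` to `s'` such that the
low inputs of `s'` are `iL` and the high inputs of `s'` are `iH`. -/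
def StepTo (G : CGS S Agent Move AP) (H I : Set AP)
    (s : S) (iL iH : Set AP) (s' : S) : Prop :=
  ∃ σ : Agent → Move, G.trans s σ = s' ∧
    G.label s' ∩ I = iL ∧ G.label s' ∩ H = iH

/-- A security simulation: related states agree on the outputs, and every step
of the first state can be matched (with the same low inputs, but possibly
different high inputs) by a step of the second state into related states. -/
def SecuritySimulation (G : CGS S Agent Move AP) (H I O : Set AP)
    (R : S → S → Prop) : Prop :=
  ∀ s t : S, R s t →
    (G.label s ∩ O = G.label t ∩ O) ∧
    ∀ iL : Set AP, iL ⊆ I → ∀ iH : Set AP, iH ⊆ H → ∀ iH' : Set AP, iH' ⊆ H →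
      ∀ s' : S, StepTo G H I s iL iH s' →
        ∃ t' : S, StepTo G H I t iL iH' t' ∧ R s' t'

/-- `G` is simulation secure: there is a security simulation relating the
initial state to itself. -/
def SimulationSecure (G : CGS S Agent Move AP) (H I O : Set AP) : Prop :=
  ∃ R : S → S → Prop, SecuritySimulation G H I O R ∧ R G.s0 G.s0

end CGS

open CGS

/-- Every input-total, simulation-secure CGS satisfies GNI; moreover the GNI
witness path can be chosen to additionally match the low inputs of `t₂`. -/
theorem simulationSecure_implies_GNI {S Agent Move AP : Type}
    [Fintype S] [Fintype Agent] [Fintype Move] [Fintype AP]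
    (G : CGS S Agent Move AP) (H I O : Set AP) (ξN ξH ξL : Agent)
    (hHI : Disjoint H I) (hHO : Disjoint H O) (hIO : Disjoint I O)
    (hIT : InputTotal G H I ξH ξL)
    (hsec : SimulationSecure G H I O) :
    GNI G H O ∧
      ∀ t₁ t₂ : ℕ → S, IsPlay G t₁ → IsPlay G t₂ →
        ∃ t₃ : ℕ → S, IsPlay G t₃ ∧ ∀ i : ℕ,
          G.label (t₃ i) ∩ H = G.label (t₁ i) ∩ H ∧
          G.label (t₃ i) ∩ I = G.label (t₂ i) ∩ I ∧
          G.label (t₃ i) ∩ O = G.label (t₂ i) ∩ O := by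
  obtain ⟨R, hsim, hR0⟩ := hsec
  have main : ∀ t₁ t₂ : ℕ → S, IsPlay G t₁ → IsPlay G t₂ →
        ∃ t₃ : ℕ → S, IsPlay G t₃ ∧ ∀ i : ℕ,
          G.label (t₃ i) ∩ H = G.label (t₁ i) ∩ H ∧
          G.label (t₃ i) ∩ I = G.label (t₂ i) ∩ I ∧
          G.label (t₃ i) ∩ O = G.label (t₂ i) ∩ O := by
    intro t₁ t₂ h₁ h₂
    have key : ∀ i : ℕ, ∀ s : S, R (t₂ i) s →
        ∃ s', StepTo G H I s (G.label (t₂ (i+1)) ∩ I) (G.label (t₁ (i+1)) ∩ H) s'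
          ∧ R (t₂ (i+1)) s' := by
      intro i s hs
      have hstep : StepTo G H I (t₂ i) (G.label (t₂ (i+1)) ∩ I)
          (G.label (t₂ (i+1)) ∩ H) (t₂ (i+1)) := by
        obtain ⟨σ, hσ⟩ := h₂.2 i
        exact ⟨σ, hσ, rfl, rfl⟩
      exact (hsim _ _ hs).2 _ Set.inter_subset_right _ Set.inter_subset_right
        _ Set.inter_subset_right _ hstep
    choose F hF1 hF2 using key
    let f : ∀ i : ℕ, {s : S // R (t₂ i) s} := fun i =>
      Nat.rec ⟨G.s0, h₂.1 ▸ hR0⟩ (fun n p => ⟨F n p.1 p.2, hF2 n p.1 p.2⟩) i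
    refine ⟨fun i => (f i).1, ⟨rfl, fun i => ?_⟩, fun i => ?_⟩
    · obtain ⟨σ, hσ, -, -⟩ := hF1 i (f i).1 (f i).2
      exact ⟨σ, hσ⟩
    · obtain ⟨hH', hI'⟩ : (G.label (f i).1 ∩ H = G.label (t₁ i) ∩ H) ∧
          (G.label (f i).1 ∩ I = G.label (t₂ i) ∩ I) := by
        cases i with
        | zero =>
          have hf0 : (f 0).1 = G.s0 := rfl
          exact ⟨congrArg (· ∩ H) (congrArg G.label (hf0.trans h₁.1.symm)),
            congrArg (· ∩ I) (congrArg G.label (hf0.trans h₂.1.symm))⟩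
        | succ n =>
          obtain ⟨σ, hσ, hI2, hH2⟩ := hF1 n (f n).1 (f n).2
          exact ⟨hH2, hI2⟩
      exact ⟨hH', hI', ((hsim _ _ (f i).2).1).symm⟩
  refine ⟨?_, main⟩
  intro t₁ t₂ h₁ h₂
  obtain ⟨t₃, hp, hl⟩ := main t₁ t₂ h₁ h₂
  exact ⟨t₃, hp, fun i => ⟨(hl i).1, (hl i).2.2⟩⟩
end
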